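/- arXiv:2001.11740 — 2 statements merged into one kernel-verified Lean document; each statement's English description precedes it below -/
import Mathlib

section
/- EXP-WT holds if and only if lim_{j→∞} γ_j = 0 and lim_{j→∞} (log λ_j⁻¹)/log j = ∞, the latter meaning that for every M > 0 one has λ_j < j^{−M} for all sufficiently large j. -/
/-! Necessity. If `γ_k ≥ c > 0` for all `k`, all `2^d` tuples in `{1,2}^d` are counted at
`ε = a^d / 2` with `a = min(c,1) λ_2`, so `log n(ε,d) ≥ d log 2` while `d + 1 + log ε⁻¹ = O(d)`.
If `λ_j ≥ j^{-M}` for infinitely many `j`, then for `d = 1` and `ε = γ_1 j^{-M} / 2` all indices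
`1,…,j` are counted, so `log n(ε,1) ≥ log j` while `2 + log ε⁻¹ ≤ 2M log j` for large `j`.

Sufficiency. By Markov's inequality, `n(ε,d) ≤ ε^{-2τ} ∏_{k ≤ d} (1 + γ_k^τ ∑_{j ≥ 2} λ_j^τ)` for
every `τ > 0`; the series converges because `λ_j` decays faster than any power of `j`, and since
`γ_k^τ → 0` the logarithm of the product is `o(d)`. Taking `τ` small gives
`log n(ε,d) ≤ δ (d + 1 + log ε⁻¹) + K_δ`. -/

open Filter Real Set Topology
open scoped ENNReal NNReal

noncomputable section

/-- The weighted eigenvalues `λ_{k,j}`: `1` if `j = 1`, and `γ_k · λ_j` if `j ≥ 2`. -/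
def lamKJ (γ lam : ℕ → ℝ) (k j : ℕ) : ℝ := if j = 1 then 1 else γ k * lam j

/-- The information complexity `n(ε,d)`: the extended-natural cardinality of the set of
`d`-tuples of positive integers `(n_1,…,n_d)` with `λ_{1,n_1} ⋯ λ_{d,n_d} > ε²`. -/
def infoN (γ lam : ℕ → ℝ) (ε : ℝ) (d : ℕ) : ℕ∞ :=
  {n : Fin d → ℕ | (∀ i, 1 ≤ n i) ∧ ε ^ 2 < ∏ i, lamKJ γ lam (i.1 + 1) (n i)}.encard

/-- EXP-SPT with a given exponent `p`: there is `C ≥ 0` with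
`n(ε,d) ≤ C (1 + log ε⁻¹)^p` for all `d ≥ 1` and `ε ∈ (0,1]`. -/
def ExpSPTwith (γ lam : ℕ → ℝ) (p : ℝ) : Prop :=
  ∃ C : ℝ, 0 ≤ C ∧ ∀ d : ℕ, 1 ≤ d → ∀ ε : ℝ, 0 < ε → ε ≤ 1 →
    (infoN γ lam ε d : ℝ≥0∞) ≤ ENNReal.ofReal (C * (1 + Real.log ε⁻¹) ^ p)

/-- Exponential strong polynomial tractability. -/
def ExpSPT (γ lam : ℕ → ℝ) : Prop := ∃ p : ℝ, 0 ≤ p ∧ ExpSPTwith γ lam p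

/-- Exponential polynomial tractability: there are `C, q, p ≥ 0` with
`n(ε,d) ≤ C d^q (1 + log ε⁻¹)^p` for all `d ≥ 1` and `ε ∈ (0,1]`. -/
def ExpPT (γ lam : ℕ → ℝ) : Prop :=
  ∃ C q p : ℝ, 0 ≤ C ∧ 0 ≤ q ∧ 0 ≤ p ∧ ∀ d : ℕ, 1 ≤ d → ∀ ε : ℝ, 0 < ε → ε ≤ 1 →
    (infoN γ lam ε d : ℝ≥0∞) ≤ ENNReal.ofReal (C * (d : ℝ) ^ q * (1 + Real.log ε⁻¹) ^ p)

/-- EXP-QPT with a given exponent `t`. -/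
def ExpQPTwith (γ lam : ℕ → ℝ) (t : ℝ) : Prop :=
  ∃ C : ℝ, 0 ≤ C ∧ ∀ d : ℕ, 1 ≤ d → ∀ ε : ℝ, 0 < ε → ε ≤ 1 →
    (infoN γ lam ε d : ℝ≥0∞) ≤
      ENNReal.ofReal (C * Real.exp (t * (1 + Real.log d) * (1 + Real.log (1 + Real.log ε⁻¹))))

/-- Exponential quasi-polynomial tractability. -/
def ExpQPT (γ lam : ℕ → ℝ) : Prop := ∃ t : ℝ, 0 ≤ t ∧ ExpQPTwith γ lam t

/-- Exponential `(s,t)`-weak tractability: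
`log max(1, n(ε,d)) / (d^t + (1 + log ε⁻¹)^s) → 0` as `d + ε⁻¹ → ∞`
(in particular `n(ε,d)` is finite for all such `d, ε`). -/
def ExpSTWT (γ lam : ℕ → ℝ) (s t : ℝ) : Prop :=
  ∀ δ : ℝ, 0 < δ → ∃ T : ℝ, ∀ d : ℕ, 1 ≤ d → ∀ ε : ℝ, 0 < ε → ε ≤ 1 →
    T ≤ (d : ℝ) + ε⁻¹ →
    ∃ N : ℕ, infoN γ lam ε d = (N : ℕ∞) ∧
      Real.log (max 1 (N : ℝ)) / ((d : ℝ) ^ t + (1 + Real.log ε⁻¹) ^ s) < δ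

/-- `j(ε) = max { j ≥ 1 : λ_j > ε² }` (a well-defined maximum when `λ_j → 0`). -/
def jEps (lam : ℕ → ℝ) (ε : ℝ) : ℕ := sSup {j : ℕ | 1 ≤ j ∧ ε ^ 2 < lam j}

/-- `d(ε) = max { d ≥ 1 : γ_d > ε² }`, with `d(ε) = 0` if `γ_1 ≤ ε²`
(a well-defined maximum when `γ_d → 0`). -/
def dEps (γ : ℕ → ℝ) (ε : ℝ) : ℕ := sSup {d : ℕ | 1 ≤ d ∧ ε ^ 2 < γ d}

lemma log_max_one_le_of_le_exp {x E : ℝ} (hx : x ≤ exp E) (hE : 0 ≤ E) :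
    log (max 1 x) ≤ E := by
  rw [← log_exp E]
  exact log_le_log (one_pos.trans_le (le_max_left _ _)) (max_le (one_le_exp hE) hx)

lemma exists_sum_range_le_mul_add_of_tendsto_zero {u : ℕ → ℝ} (hu : Tendsto u atTop (𝓝 0))
    {η : ℝ} (hη : 0 < η) : ∃ K : ℝ, ∀ d : ℕ, ∑ k ∈ Finset.range d, u k ≤ η * d + K := by
  obtain ⟨k₀, hk₀⟩ := eventually_atTop.1 (hu.eventually_le_const hη)
  refine ⟨∑ k ∈ Finset.range k₀, |u k|, fun d => ?_⟩
  rw [← Finset.sum_filter_add_sum_filter_not _ (· < k₀)]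
  have hhead : ∑ k ∈ (Finset.range d).filter (· < k₀), u k ≤ ∑ k ∈ Finset.range k₀, |u k| :=
    calc _ ≤ ∑ k ∈ (Finset.range d).filter (· < k₀), |u k| :=
          Finset.sum_le_sum fun k _ => le_abs_self _
      _ ≤ _ := Finset.sum_le_sum_of_subset_of_nonneg
          (fun k hk => Finset.mem_range.2 (Finset.mem_filter.1 hk).2) fun k _ _ => abs_nonneg _
  have htail : ∑ k ∈ (Finset.range d).filter (¬ · < k₀), u k ≤ η * d :=
    calc _ ≤ ∑ _k ∈ (Finset.range d).filter (¬ · < k₀), η :=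
          Finset.sum_le_sum fun k hk => hk₀ k (not_lt.1 (Finset.mem_filter.1 hk).2)
      _ ≤ ∑ _k ∈ Finset.range d, η :=
          Finset.sum_le_sum_of_subset_of_nonneg (Finset.filter_subset _ _) fun _ _ _ => hη.le
      _ = η * d := by simp [mul_comm]
  linarith

lemma card_filter_lt_le_rpow_mul_sum {ι : Type*} (s : Finset ι) {g : ι → ℝ}
    (hg : ∀ i ∈ s, 0 ≤ g i) {x τ : ℝ} (hx : 0 < x) (hτ : 0 ≤ τ) :
    ((s.filter (x < g ·)).card : ℝ) ≤ x ^ (-τ) * ∑ i ∈ s, g i ^ τ := by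
  have hxτ : 0 < x ^ τ := rpow_pos_of_pos hx τ
  rw [Finset.mul_sum, Finset.card_eq_sum_ones, Nat.cast_sum, Nat.cast_one]
  calc ∑ _i ∈ s.filter (x < g ·), (1 : ℝ)
      ≤ ∑ i ∈ s.filter (x < g ·), x ^ (-τ) * g i ^ τ := by
        refine Finset.sum_le_sum fun i hi => ?_
        rw [rpow_neg hx.le, ← div_eq_inv_mul, one_le_div hxτ]
        exact rpow_le_rpow hx.le (Finset.mem_filter.1 hi).2.le hτ
    _ ≤ ∑ i ∈ s, x ^ (-τ) * g i ^ τ :=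
        Finset.sum_le_sum_of_subset_of_nonneg (Finset.filter_subset _ _) fun i hi _ =>
          mul_nonneg (rpow_nonneg hx.le _) (rpow_nonneg (hg i hi) _)

lemma lt_add_one_add_log_inv {L d ε : ℝ} (hd : 0 ≤ d) (hε : 0 < ε) (hε1 : ε ≤ 1)
    (h : L + exp L ≤ d + ε⁻¹) : L < d + (1 + log ε⁻¹) := by
  have hlog : 0 ≤ log ε⁻¹ := log_nonneg (one_le_inv_iff₀.2 ⟨hε, hε1⟩)
  rcases le_or_gt L d with hLd | hdL
  · linarith
  · have : L < log ε⁻¹ := (lt_log_iff_exp_lt (by positivity)).2 (by linarith)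
    linarith

lemma tendsto_zero_of_antitoneOn {u : ℕ → ℝ} (hanti : AntitoneOn u (Ici 1))
    (hpos : ∀ k, 1 ≤ k → 0 < u k) (hsmall : ∀ c > 0, ∃ k, 1 ≤ k ∧ u k < c) :
    Tendsto u atTop (𝓝 0) := by
  refine tendsto_order.2 ⟨fun c hc => eventually_atTop.2 ⟨1, fun k hk => hc.trans (hpos k hk)⟩,
    fun c hc => ?_⟩
  obtain ⟨k₀, hk₀, hlt⟩ := hsmall c hc
  exact eventually_atTop.2 ⟨k₀, fun k hk => (hanti hk₀ (hk₀.trans hk) hk).trans_lt hlt⟩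

section

variable {γ lam : ℕ → ℝ}

lemma lamKJ_mem_Icc {k j : ℕ} (hγ : γ k ∈ Icc 0 1) (hlam : lam j ∈ Icc 0 1) :
    lamKJ γ lam k j ∈ Icc 0 1 := by
  unfold lamKJ
  split_ifs
  · simp
  · exact ⟨mul_nonneg hγ.1 hlam.1, mul_le_one₀ hγ.2 hlam.1 hlam.2⟩

lemma lamKJ_le_of_ne_one {k j : ℕ} (hj : j ≠ 1) (hγ : γ k ≤ 1) (hlam : 0 ≤ lam j) :
    lamKJ γ lam k j ≤ lam j := by
  rw [lamKJ, if_neg hj]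
  exact mul_le_of_le_one_left hlam hγ

lemma pow_le_infoN {ε a : ℝ} {d m : ℕ} (ha : 0 ≤ a)
    (hle : ∀ k j, 1 ≤ k → k ≤ d → 1 ≤ j → j ≤ m → a ≤ lamKJ γ lam k j) (hε : ε ^ 2 < a ^ d) :
    ((m ^ d : ℕ) : ℕ∞) ≤ infoN γ lam ε d := by
  let f : (Fin d → Fin m) → Fin d → ℕ := fun b i => b i + 1
  have hf : f.Injective := fun b b' h =>
    funext fun i => Fin.ext (by simpa [f] using congrFun h i)
  calc ((m ^ d : ℕ) : ℕ∞) = ENat.card (Fin d → Fin m) := by simp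
    _ ≤ (range f).encard := hf.encard_range
    _ ≤ infoN γ lam ε d := by
      refine Set.encard_le_encard (range_subset_iff.2 fun b => ⟨fun i => by simp [f], ?_⟩)
      calc ε ^ 2 < a ^ d := hε
        _ = ∏ _i : Fin d, a := by simp
        _ ≤ _ := Finset.prod_le_prod (fun _ _ => ha) fun i _ =>
          hle _ _ (by omega) i.2 (by omega) (b i).2

lemma infoN_eq_card_filter_piFinset (hγ : ∀ k, 1 ≤ k → γ k ∈ Icc 0 1)
    (hlam : ∀ j, 1 ≤ j → lam j ∈ Icc 0 1) {ε : ℝ} {d B : ℕ} (hB1 : 1 ≤ B)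
    (hB : ∀ j, B < j → lam j ≤ ε ^ 2) :
    infoN γ lam ε d = ((Fintype.piFinset fun _ : Fin d => Finset.Icc 1 B).filter
      fun n => ε ^ 2 < ∏ i, lamKJ γ lam (i.1 + 1) (n i)).card := by
  rw [infoN, ← Set.encard_coe_eq_coe_finsetCard]
  congr 1
  ext n
  simp only [Set.mem_ofPred_eq, Finset.coe_filter, Fintype.mem_piFinset, Finset.mem_Icc]
  refine ⟨fun ⟨hn1, hprod⟩ => ⟨fun i => ⟨hn1 i, ?_⟩, hprod⟩, fun ⟨hn, hprod⟩ =>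
    ⟨fun i => (hn i).1, hprod⟩⟩
  by_contra! hBi
  have hmem : ∀ i', lamKJ γ lam (i'.1 + 1) (n i') ∈ Icc 0 1 := fun i' =>
    lamKJ_mem_Icc (hγ _ (by omega)) (hlam _ (hn1 i'))
  have hfactor : ∏ i', lamKJ γ lam (i'.1 + 1) (n i') ≤ lamKJ γ lam (i.1 + 1) (n i) := by
    rw [← Finset.mul_prod_erase _ _ (Finset.mem_univ i)]
    exact mul_le_of_le_one_right (hmem i).1
      (Finset.prod_le_one (fun i' _ => (hmem i').1) fun i' _ => (hmem i').2)
  have := (lamKJ_le_of_ne_one (k := i.1 + 1) (by omega) (hγ _ (by omega)).2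
    (hlam _ (hn1 i)).1).trans (hB _ hBi)
  linarith

lemma sum_Icc_lamKJ_rpow_le (hγ : ∀ k, 1 ≤ k → γ k ∈ Icc 0 1)
    (hlam : ∀ j, 1 ≤ j → lam j ∈ Icc 0 1) {k B : ℕ} (hk : 1 ≤ k) (hB1 : 1 ≤ B) {τ C : ℝ}
    (hC : ∑ j ∈ Finset.Icc 2 B, lam j ^ τ ≤ C) :
    ∑ j ∈ Finset.Icc 1 B, lamKJ γ lam k j ^ τ ≤ 1 + γ k ^ τ * C := by
  rw [← Finset.insert_Icc_add_one_left_eq_Icc hB1, Finset.sum_insert (by simp)]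
  refine add_le_add (by simp [lamKJ]) (le_of_eq_of_le ?_
    (mul_le_mul_of_nonneg_left hC (rpow_nonneg (hγ k hk).1 _)))
  rw [Finset.mul_sum]
  refine Finset.sum_congr rfl fun j hj => ?_
  rw [Finset.mem_Icc] at hj
  rw [lamKJ, if_neg (by omega), mul_rpow (hγ k hk).1 (hlam j (by omega)).1]

lemma exists_infoN_eq_and_le_exp (hγ : ∀ k, 1 ≤ k → γ k ∈ Icc 0 1)
    (hlam : ∀ j, 1 ≤ j → lam j ∈ Icc 0 1) {ε τ C : ℝ} (hε : 0 < ε) (hτ : 0 < τ) (hC0 : 0 ≤ C)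
    (hC : ∀ B, ∑ j ∈ Finset.Icc 2 B, lam j ^ τ ≤ C) (hlim : Tendsto lam atTop (𝓝 0)) (d : ℕ) :
    ∃ N : ℕ, infoN γ lam ε d = N ∧
      (N : ℝ) ≤ exp (2 * τ * log ε⁻¹ + C * ∑ i : Fin d, γ (i + 1) ^ τ) := by
  obtain ⟨B₀, hB₀⟩ := eventually_atTop.1 (hlim.eventually_le_const (pow_pos hε 2))
  set box := Fintype.piFinset fun _ : Fin d => Finset.Icc 1 (B₀ + 1)
  refine ⟨_, infoN_eq_card_filter_piFinset hγ hlam (Nat.le_add_left 1 B₀)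
    (fun j hj => hB₀ j (by omega)), ?_⟩
  have hnonneg : ∀ n ∈ box, ∀ i, 0 ≤ lamKJ γ lam (i.1 + 1) (n i) := fun n hn i =>
    (lamKJ_mem_Icc (hγ _ (by omega))
      (hlam _ (Finset.mem_Icc.1 (Fintype.mem_piFinset.1 hn i)).1)).1
  calc _ ≤ (ε ^ 2) ^ (-τ) * ∑ n ∈ box, (∏ i, lamKJ γ lam (i.1 + 1) (n i)) ^ τ :=
        card_filter_lt_le_rpow_mul_sum box
          (fun n hn => Finset.prod_nonneg fun i _ => hnonneg n hn i) (pow_pos hε 2) hτ.le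
    _ = exp (2 * τ * log ε⁻¹) * ∏ i : Fin d, ∑ j ∈ Finset.Icc 1 (B₀ + 1),
          lamKJ γ lam (i.1 + 1) j ^ τ := by
        rw [Finset.prod_univ_sum, rpow_def_of_pos (pow_pos hε 2), log_pow, log_inv]
        congr 1
        · ring_nf
        · exact Finset.sum_congr rfl fun n hn =>
            (Real.finsetProd_rpow _ _ (fun i _ => hnonneg n hn i) _).symm
    _ ≤ exp (2 * τ * log ε⁻¹) * ∏ i : Fin d, (1 + γ (i + 1) ^ τ * C) := by
        refine mul_le_mul_of_nonneg_left (Finset.prod_le_prod (fun i _ => ?_) fun i _ => ?_)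
          (exp_pos _).le
        · exact Finset.sum_nonneg fun j hj => rpow_nonneg
            (lamKJ_mem_Icc (hγ (i.1 + 1) (by omega)) (hlam _ (Finset.mem_Icc.1 hj).1)).1 _
        · exact sum_Icc_lamKJ_rpow_le hγ hlam (by omega) (by omega) (hC _)
    _ ≤ exp (2 * τ * log ε⁻¹) * exp (∑ i : Fin d, γ (i + 1) ^ τ * C) := by
        gcongr
        exact prod_one_add_le_exp_sum _ fun i =>
          mul_nonneg (rpow_nonneg (hγ _ (by omega)).1 _) hC0
    _ = _ := by rw [← exp_add, ← Finset.sum_mul, mul_comm C]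

lemma natCast_le_infoN_one (hlam_anti : AntitoneOn lam (Ici 1)) (hγ1 : 0 ≤ γ 1) {j : ℕ}
    (hj : 1 ≤ j) {ε a : ℝ} (ha0 : 0 ≤ a) (ha1 : a ≤ 1) (hlamj : a ≤ γ 1 * lam j)
    (hε : ε ^ 2 < a) : (j : ℕ∞) ≤ infoN γ lam ε 1 := by
  have hle : ∀ k i, 1 ≤ k → k ≤ 1 → 1 ≤ i → i ≤ j → a ≤ lamKJ γ lam k i := by
    intro k i hk hk1 hi hij
    obtain rfl : k = 1 := le_antisymm hk1 hk
    rcases eq_or_ne i 1 with rfl | hi1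
    · simpa [lamKJ] using ha1
    · rw [lamKJ, if_neg hi1]
      exact hlamj.trans (mul_le_mul_of_nonneg_left (hlam_anti hi hj hij) hγ1)
  simpa using pow_le_infoN ha0 hle (by rwa [pow_one])

lemma expSTWT_one_one_of_forall_log_le
    (h : ∀ δ > 0, ∃ K : ℝ, ∀ d : ℕ, 1 ≤ d → ∀ ε : ℝ, 0 < ε → ε ≤ 1 → ∃ N : ℕ,
      infoN γ lam ε d = N ∧ log (max 1 (N : ℝ)) ≤ δ * (d + (1 + log ε⁻¹)) + K) :
    ExpSTWT γ lam 1 1 := by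
  intro δ hδ
  obtain ⟨K, hK⟩ := h (δ / 2) (half_pos hδ)
  set L := 2 * |K| / δ
  have hL : 0 ≤ L := by positivity
  refine ⟨L + exp L, fun d hd ε hε hε1 hT => ?_⟩
  obtain ⟨N, hN, hlog⟩ := hK d hd ε hε hε1
  have hD := lt_add_one_add_log_inv (Nat.cast_nonneg d) hε hε1 hT
  refine ⟨N, hN, ?_⟩
  rw [rpow_one, rpow_one, div_lt_iff₀ (by linarith)]
  have : K < δ / 2 * (d + (1 + log ε⁻¹)) :=
    calc K ≤ δ / 2 * L := by
          rw [show δ / 2 * L = |K| by simp only [L]; field_simp]; exact le_abs_self K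
      _ < _ := by gcongr
  linarith

lemma ExpSTWT.log_lt_of_le_infoN (h : ExpSTWT γ lam 1 1) {δ : ℝ} (hδ : 0 < δ) :
    ∃ T : ℝ, ∀ d : ℕ, 1 ≤ d → ∀ ε : ℝ, 0 < ε → ε ≤ 1 → T ≤ d + ε⁻¹ →
      ∀ m : ℕ, (m : ℕ∞) ≤ infoN γ lam ε d → log m < δ * (d + (1 + log ε⁻¹)) := by
  obtain ⟨T, hT⟩ := h δ hδ
  refine ⟨T, fun d hd ε hε hε1 hdT m hm => ?_⟩
  obtain ⟨N, hN, hlt⟩ := hT d hd ε hε hε1 hdT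
  have hD : 0 < (d : ℝ) + (1 + log ε⁻¹) := by
    have := log_nonneg (one_le_inv_iff₀.2 ⟨hε, hε1⟩)
    positivity
  rw [rpow_one, rpow_one, div_lt_iff₀ hD] at hlt
  rw [hN, Nat.cast_le] at hm
  refine lt_of_le_of_lt ?_ hlt
  rcases m.eq_zero_or_pos with rfl | hm0
  · simpa using log_nonneg (le_max_left 1 (N : ℝ))
  · exact log_le_log (by exact_mod_cast hm0) ((Nat.cast_le.2 hm).trans (le_max_right _ _))

lemma tendsto_zero_of_expSTWT (hlam2 : 0 < lam 2) (hlam2le : lam 2 ≤ 1)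
    (hγ_anti : AntitoneOn γ (Ici 1)) (hγ_pos : ∀ k, 1 ≤ k → 0 < γ k)
    (h : ExpSTWT γ lam 1 1) : Tendsto γ atTop (𝓝 0) := by
  refine tendsto_zero_of_antitoneOn hγ_anti hγ_pos fun c hc => ?_
  by_contra! hge
  set a := min c 1 * lam 2
  have ha0 : 0 < a := mul_pos (lt_min hc one_pos) hlam2
  have ha1 : a ≤ 1 := mul_le_one₀ (min_le_right _ _) hlam2.le hlam2le
  set A := log a⁻¹
  have hA : 0 ≤ A := log_nonneg (one_le_inv_iff₀.2 ⟨ha0, ha1⟩)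
  have hlog2 : 0 < log 2 := log_pos one_lt_two
  set δ := log 2 / (2 + log 2 + A)
  obtain ⟨T, hT⟩ := h.log_lt_of_le_infoN (δ := δ) (by positivity)
  set d := ⌈T⌉₊ + 1
  set ε := a ^ d / 2
  have had : a ^ d ≤ 1 := pow_le_one₀ ha0.le ha1
  have hε : 0 < ε := by positivity
  have hdT : T ≤ d + ε⁻¹ := by
    have : T ≤ d := (Nat.le_ceil T).trans (by simp [d])
    linarith [inv_pos.2 hε]
  have hlow : ((2 ^ d : ℕ) : ℕ∞) ≤ infoN γ lam ε d := by
    refine pow_le_infoN ha0.le (fun k j hk _ hj hj2 => ?_) ?_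
    · interval_cases j
      · simpa [lamKJ] using ha1
      · simp only [lamKJ, if_neg (show (2 : ℕ) ≠ 1 by norm_num)]
        exact mul_le_mul_of_nonneg_right ((min_le_left _ _).trans (hge k hk)) hlam2.le
    · have : 0 < a ^ d := by positivity
      simp only [ε, div_pow]
      nlinarith
  have hlogε : log ε⁻¹ = log 2 + d * A := by
    rw [inv_div, log_div two_ne_zero (by positivity), log_pow]
    simp only [A, log_inv]
    ring
  have := hT d (by omega) ε hε (by simp only [ε]; linarith) hdT _ hlow
  rw [Nat.cast_pow, Nat.cast_ofNat, log_pow, hlogε] at this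
  have hbound : δ * (d + (1 + (log 2 + d * A))) ≤ d * log 2 :=
    calc _ ≤ δ * (d * (2 + log 2 + A)) := by
          have : (1 : ℝ) ≤ d := by simp [d]
          gcongr; nlinarith
      _ = d * log 2 := by simp only [δ]; field_simp
  linarith

lemma eventually_lt_rpow_neg_of_expSTWT (hlam_anti : AntitoneOn lam (Ici 1))
    (hγ1 : γ 1 ∈ Ioc 0 1) (h : ExpSTWT γ lam 1 1) {M : ℝ} (hM : 0 < M) :
    ∀ᶠ j : ℕ in atTop, lam j < (j : ℝ) ^ (-M) := by
  by_contra hfreq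
  simp only [not_eventually, not_lt] at hfreq
  set C₀ := 2 + log 2 + log (γ 1)⁻¹
  obtain ⟨T, hT⟩ := h.log_lt_of_le_infoN (δ := 1 / (2 * M)) (by positivity)
  have hlarge : ∀ᶠ j : ℕ in atTop, 2 ≤ j ∧ C₀ ≤ M * log j ∧ T ≤ (j : ℝ) ^ M :=
    (eventually_ge_atTop 2).and <|
      ((tendsto_log_atTop.comp tendsto_natCast_atTop_atTop).eventually_ge_atTop (C₀ / M)).and
        ((tendsto_rpow_atTop hM).comp tendsto_natCast_atTop_atTop |>.eventually_ge_atTop T)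
      |>.mono fun j hj => ⟨(div_le_iff₀' hM).1 hj.1, hj.2⟩
  obtain ⟨j, hjlam, hj2, hjlog, hjT⟩ := (hfreq.and_eventually hlarge).exists
  have hj0 : (0 : ℝ) < j := by exact_mod_cast (by omega : 0 < j)
  have hjM : 0 < (j : ℝ) ^ (-M) := rpow_pos_of_pos hj0 _
  have hjM1 : (j : ℝ) ^ (-M) ≤ 1 :=
    rpow_le_one_of_one_le_of_nonpos (by exact_mod_cast (by omega : 1 ≤ j)) (by linarith)
  set a := γ 1 * (j : ℝ) ^ (-M)
  have ha0 : 0 < a := mul_pos hγ1.1 hjM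
  have ha1 : a ≤ 1 := mul_le_one₀ hγ1.2 hjM.le hjM1
  set ε := a / 2
  have hlow : (j : ℕ∞) ≤ infoN γ lam ε 1 :=
    natCast_le_infoN_one hlam_anti hγ1.1.le (by omega) ha0.le ha1
      (mul_le_mul_of_nonneg_left hjlam hγ1.1.le) (by simp only [ε]; nlinarith)
  have hεinv : (j : ℝ) ^ M ≤ ε⁻¹ :=
    calc (j : ℝ) ^ M = ((j : ℝ) ^ (-M))⁻¹ := by rw [rpow_neg hj0.le, inv_inv]
      _ ≤ a⁻¹ := inv_anti₀ ha0 (mul_le_of_le_one_left hjM.le hγ1.2)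
      _ ≤ ε⁻¹ := inv_anti₀ (by positivity) (by simp only [ε]; linarith)
  have := hT 1 le_rfl ε (by positivity) (by simp only [ε]; linarith)
    (by push_cast; linarith) j hlow
  have hlogε : log ε⁻¹ = log 2 + log (γ 1)⁻¹ + M * log j := by
    simp only [ε, a, inv_div]
    rw [log_div two_ne_zero ha0.ne', log_mul hγ1.1.ne' hjM.ne', log_rpow hj0, log_inv]
    ring
  rw [Nat.cast_one, hlogε] at this
  have hbound : 1 / (2 * M) * (1 + (1 + (log 2 + log (γ 1)⁻¹ + M * log j))) ≤ log j :=
    calc _ ≤ 1 / (2 * M) * (2 * M * log j) := by gcongr; linarith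
      _ = log j := by field_simp
  linarith

lemma tendsto_zero_of_forall_eventually_lt_rpow_neg
    (hlam : ∀ j, 1 ≤ j → lam j ∈ Icc 0 1)
    (hdecay : ∀ M : ℝ, 0 < M → ∀ᶠ j : ℕ in atTop, lam j < (j : ℝ) ^ (-M)) :
    Tendsto lam atTop (𝓝 0) := by
  have hinv : Tendsto (fun j : ℕ => (j : ℝ) ^ (-1 : ℝ)) atTop (𝓝 0) :=
    (tendsto_rpow_neg_atTop one_pos).comp tendsto_natCast_atTop_atTop
  exact tendsto_of_tendsto_of_tendsto_of_le_of_le' tendsto_const_nhds hinv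
    ((eventually_ge_atTop 1).mono fun j hj => (hlam j hj).1)
    ((hdecay 1 one_pos).mono fun j hj => hj.le)

lemma exists_sum_Icc_rpow_le (hlam : ∀ j, 1 ≤ j → lam j ∈ Icc 0 1)
    (hdecay : ∀ M : ℝ, 0 < M → ∀ᶠ j : ℕ in atTop, lam j < (j : ℝ) ^ (-M)) {τ : ℝ} (hτ : 0 < τ) :
    ∃ C : ℝ, 0 ≤ C ∧ ∀ B, ∑ j ∈ Finset.Icc 2 B, lam j ^ τ ≤ C := by
  have hsum : Summable fun j => lam j ^ τ := by
    refine Summable.of_norm_bounded_eventually_nat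
      (Real.summable_nat_rpow.2 (show (-2 : ℝ) < -1 by norm_num)) ?_
    filter_upwards [hdecay (2 / τ) (by positivity), eventually_ge_atTop 1] with j hj hj1
    have hl := (hlam j hj1).1
    rw [norm_of_nonneg (rpow_nonneg hl _)]
    calc lam j ^ τ ≤ ((j : ℝ) ^ (-(2 / τ))) ^ τ := rpow_le_rpow hl hj.le hτ.le
      _ = (j : ℝ) ^ (-2 : ℝ) := by rw [← rpow_mul (Nat.cast_nonneg j)]; field_simp
  have hsum2 := (summable_nat_add_iff 2).2 hsum
  refine ⟨∑' j, lam (j + 2) ^ τ, tsum_nonneg fun j => rpow_nonneg (hlam _ (by omega)).1 _,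
    fun B => ?_⟩
  calc ∑ j ∈ Finset.Icc 2 B, lam j ^ τ
      = ∑ j ∈ (Finset.Icc 2 B).image (· - 2), lam (j + 2) ^ τ := by
        rw [Finset.sum_image fun i hi j hj hij => by
          simp only [Finset.coe_Icc, Set.mem_Icc] at hi hj; omega]
        exact Finset.sum_congr rfl fun j hj => by
          rw [Nat.sub_add_cancel (Finset.mem_Icc.1 hj).1]
    _ ≤ _ := hsum2.sum_le_tsum _ fun j _ => rpow_nonneg (hlam _ (by omega)).1 _

lemma expSTWT_of_tendsto_zero (hγ : ∀ k, 1 ≤ k → γ k ∈ Icc 0 1)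
    (hlam : ∀ j, 1 ≤ j → lam j ∈ Icc 0 1) (hγ0 : Tendsto γ atTop (𝓝 0))
    (hdecay : ∀ M : ℝ, 0 < M → ∀ᶠ j : ℕ in atTop, lam j < (j : ℝ) ^ (-M)) :
    ExpSTWT γ lam 1 1 := by
  refine expSTWT_one_one_of_forall_log_le fun δ hδ => ?_
  obtain ⟨C, hC0, hC⟩ := exists_sum_Icc_rpow_le hlam hdecay (half_pos hδ)
  have hγτ : Tendsto (fun k => γ (k + 1) ^ (δ / 2)) atTop (𝓝 0) := by
    simpa [zero_rpow (half_pos hδ).ne'] using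
      ((hγ0.comp (tendsto_add_atTop_nat 1)).rpow_const (Or.inr (half_pos hδ).le))
  obtain ⟨K, hK⟩ := exists_sum_range_le_mul_add_of_tendsto_zero hγτ
    (show 0 < δ / (C + 1) by positivity)
  refine ⟨C * K, fun d hd ε hε hε1 => ?_⟩
  obtain ⟨N, hN, hNle⟩ := exists_infoN_eq_and_le_exp hγ hlam hε (half_pos hδ) hC0 hC
    (tendsto_zero_of_forall_eventually_lt_rpow_neg hlam hdecay) d
  have hlogε : 0 ≤ log ε⁻¹ := log_nonneg (one_le_inv_iff₀.2 ⟨hε, hε1⟩)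
  have hsumγ : ∑ i : Fin d, γ (i + 1) ^ (δ / 2) ≤ δ / (C + 1) * d + K := by
    simpa only [Fin.sum_univ_eq_sum_range (fun k => γ (k + 1) ^ (δ / 2))] using hK d
  refine ⟨N, hN, (log_max_one_le_of_le_exp hNle ?_).trans ?_⟩
  · exact add_nonneg (by positivity) (mul_nonneg hC0 (Finset.sum_nonneg fun i _ =>
      rpow_nonneg (hγ _ (by omega)).1 _))
  · have hCδ : C * (δ / (C + 1)) ≤ δ := by
      rw [mul_div_assoc', div_le_iff₀ (by positivity)]; nlinarith
    have : C * ∑ i : Fin d, γ (i + 1) ^ (δ / 2) ≤ δ * d + C * K :=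
      calc _ ≤ C * (δ / (C + 1) * d + K) := mul_le_mul_of_nonneg_left hsumγ hC0
        _ ≤ δ * d + C * K := by nlinarith [(Nat.cast_nonneg d : (0 : ℝ) ≤ d)]
    nlinarith

end

/-- EXP-WT holds iff γ_j → 0 and (log λ_j⁻¹)/log j → ∞, the latter meaning
that for every M > 0 one has λ_j < j^(-M) for all sufficiently large j. -/
theorem stmt3 (γ lam : ℕ → ℝ)
    (hlam_anti : AntitoneOn lam (Set.Ici 1)) (hlam1 : lam 1 = 1) (hlam2 : 0 < lam 2)
    (hlam_nonneg : ∀ j, 1 ≤ j → 0 ≤ lam j)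
    (hγ_anti : AntitoneOn γ (Set.Ici 1))
    (hγ_pos : ∀ j, 1 ≤ j → 0 < γ j) (hγ_le : ∀ j, 1 ≤ j → γ j ≤ 1) :
    ExpSTWT γ lam 1 1 ↔
      (Tendsto γ atTop (nhds 0) ∧
        ∀ M : ℝ, 0 < M → ∀ᶠ j : ℕ in atTop, lam j < (j : ℝ) ^ (-M)) := by
  have hlam : ∀ j, 1 ≤ j → lam j ∈ Icc 0 1 := fun j hj =>
    ⟨hlam_nonneg j hj, hlam1 ▸ hlam_anti (mem_Ici.2 le_rfl) (mem_Ici.2 hj) hj⟩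
  have hγ : ∀ k, 1 ≤ k → γ k ∈ Icc 0 1 := fun k hk => ⟨(hγ_pos k hk).le, hγ_le k hk⟩
  refine ⟨fun h => ⟨?_, fun M hM => ?_⟩, fun ⟨hγ0, hdecay⟩ => ?_⟩
  · exact tendsto_zero_of_expSTWT hlam2 (hlam 2 (by norm_num)).2 hγ_anti hγ_pos h
  · exact eventually_lt_rpow_neg_of_expSTWT hlam_anti ⟨hγ_pos 1 le_rfl, hγ_le 1 le_rfl⟩ h hM
  · exact expSTWT_of_tendsto_zero hγ hlam hγ0 hdecay
end
end

section
/- Let 0 < t < 1. Then EXP-(1,t)-WT holds if and only if lim_{j→∞} (log γ_j⁻¹)/log j = ∞ and lim_{j→∞} (log λ_j⁻¹)/log j = ∞, i.e., for every M > 0 one has γ_j < j^{−M} for all sufficiently large j, and for every M > 0 one has λ_j < j^{−M} for all sufficiently large j. -/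
/-! Sufficiency: for every `τ > 0` the sums `∑ λ_j ^ τ` and `∑ γ_k ^ τ` converge, and summing
`∏ λ_{k,n_k} ^ τ ≥ ε ^ (2τ)` over the admissible tuples gives
`n(ε,d) ε ^ (2τ) ≤ ∏_k (1 + γ_k ^ τ ∑_{j ≥ 2} λ_j ^ τ) ≤ exp (∑ λ_j ^ τ ∑ γ_k ^ τ)`,
so `log n(ε,d) ≤ C_τ + 2τ log ε⁻¹`; as `τ` is arbitrary this is `o(d ^ t + log ε⁻¹)`.

Necessity of the decay of `λ`: if `λ_j ≥ j ^ (-M)` infinitely often, take `ε² = γ_1 λ_j / 2` in a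
fixed dimension; the tuples `(m, 1, …, 1)`, `m ≤ j`, give `log n ≥ log j`, while
`log ε⁻¹ ≤ (M / 2) log j + O(1)`.

Necessity of the decay of `γ`: if `γ_d ≥ d ^ (-M)` infinitely often, take `m = ⌈d ^ t⌉` and
`ε² = (γ_d λ_2) ^ m / 2`; the `(d choose m) ≥ (d / m) ^ m` tuples with exactly `m` entries `2` give
`log n ≥ m ((1 - t) log d - log 2)`, while the denominator is `O(M m log d)`. -/

open Filter Real Set Topology
open scoped ENNReal NNReal

noncomputable section

theorem Nat.div_pow_le_choose {α : Type*} [Field α] [LinearOrder α] [IsStrictOrderedRing α]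
    {n k : ℕ} (h : k ≤ n) : ((n : α) / k) ^ k ≤ n.choose k := by
  induction k generalizing n with
  | zero => simp
  | succ k ih =>
    obtain ⟨n, rfl⟩ : ∃ n', n = n' + 1 := ⟨n - 1, by omega⟩
    have hratio : (((n + 1 : ℕ) : α) / (k + 1 : ℕ)) ^ k ≤ ((n : α) / k) ^ k := by
      rcases Nat.eq_zero_or_pos k with rfl | hk
      · simp
      refine pow_le_pow_left₀ (by positivity) ?_ k
      rw [div_le_div_iff₀ (by positivity) (by positivity)]
      push_cast
      linarith [(show (k : α) ≤ n by exact_mod_cast (by omega : k ≤ n))]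
    have hchoose : ((n + 1).choose (k + 1) : α) = (n + 1 : ℕ) / (k + 1 : ℕ) * n.choose k := by
      rw [div_mul_eq_mul_div, eq_div_iff (by positivity)]
      exact_mod_cast (Nat.add_one_mul_choose_eq n k).symm
    rw [_root_.pow_succ', hchoose]
    gcongr
    exact hratio.trans (ih (by omega))

theorem mul_sub_log_two_le_log_choose {t : ℝ} (ht0 : 0 ≤ t) (ht1 : t ≤ 1) {d : ℕ} (hd : 1 ≤ d) :
    (⌈(d : ℝ) ^ t⌉₊ : ℝ) * ((1 - t) * log d - log 2) ≤ log (d.choose ⌈(d : ℝ) ^ t⌉₊) := by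
  set m := ⌈(d : ℝ) ^ t⌉₊
  have hd1 : (1 : ℝ) ≤ d := by exact_mod_cast hd
  have hdt : 1 ≤ (d : ℝ) ^ t := Real.one_le_rpow hd1 ht0
  have hm_ge : (d : ℝ) ^ t ≤ m := Nat.le_ceil _
  have hm_le : (m : ℝ) ≤ 2 * (d : ℝ) ^ t := by
    linarith [Nat.ceil_lt_add_one (by positivity : (0 : ℝ) ≤ (d : ℝ) ^ t)]
  have hmd : m ≤ d := Nat.ceil_le.mpr <| by
    simpa using Real.rpow_le_rpow_of_exponent_le hd1 ht1
  have hm0 : (0 : ℝ) < m := by linarith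
  have hratio : (1 - t) * log d - log 2 ≤ log (d / m) :=
    calc (1 - t) * log d - log 2 = log ((d : ℝ) / (2 * (d : ℝ) ^ t)) := by
          rw [Real.log_div (by positivity) (by positivity),
            Real.log_mul two_ne_zero (by positivity), Real.log_rpow (by positivity)]
          ring
      _ ≤ log (d / m) :=
        Real.log_le_log (by positivity) (div_le_div_of_nonneg_left (by positivity) hm0 hm_le)
  calc (m : ℝ) * ((1 - t) * log d - log 2) ≤ m * log (d / m) :=
        mul_le_mul_of_nonneg_left hratio hm0.le
    _ = log (((d : ℝ) / m) ^ m) := (Real.log_pow _ _).symm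
    _ ≤ log (d.choose m) := Real.log_le_log (by positivity) (Nat.div_pow_le_choose hmd)

theorem log_inv_nonneg_of_le_one {ε : ℝ} (hε0 : 0 < ε) (hε1 : ε ≤ 1) : 0 ≤ log ε⁻¹ :=
  Real.log_nonneg ((one_le_inv₀ hε0).mpr hε1)

theorem log_inv_le_mul_log_of_rpow_neg_le {x y M : ℝ} (hy : 0 < y) (h : y ^ (-M) ≤ x) :
    log x⁻¹ ≤ M * log y := by
  rw [Real.log_inv, neg_le, ← neg_mul, ← Real.log_rpow hy]
  exact Real.log_le_log (Real.rpow_pos_of_pos hy _) h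

theorem log_max_one_le {N y B : ℝ} (hy0 : 0 < y) (hy1 : y ≤ 1) (hB : 0 ≤ B)
    (hN : N * y ≤ exp B) : log (max 1 N) ≤ B + log y⁻¹ := by
  have hmax : max 1 N ≤ exp B / y := by
    refine max_le ((le_div_iff₀ hy0).mpr ?_) ((le_div_iff₀ hy0).mpr hN)
    rw [one_mul]
    exact hy1.trans (Real.one_le_exp hB)
  calc log (max 1 N) ≤ log (exp B / y) := Real.log_le_log (by positivity) hmax
    _ = B + log y⁻¹ := by
      rw [div_eq_mul_inv, Real.log_mul (Real.exp_ne_zero B) (inv_ne_zero hy0.ne'), Real.log_exp]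

theorem exists_le_rpow_add_log_inv {t : ℝ} (ht : 0 < t) (R : ℝ) :
    ∃ T : ℝ, ∀ x : ℝ, 0 ≤ x → ∀ ε : ℝ, 0 < ε → ε ≤ 1 → T ≤ x + ε⁻¹ →
      R ≤ x ^ t + log ε⁻¹ := by
  refine ⟨max R 0 ^ t⁻¹ + exp R, fun x hx ε hε0 hε1 hT => ?_⟩
  have hL := log_inv_nonneg_of_le_one hε0 hε1
  rcases le_or_gt (max R 0 ^ t⁻¹) x with hRx | hRx
  · have : max R 0 ≤ x ^ t :=
      calc max R 0 = (max R 0 ^ t⁻¹) ^ t := by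
            rw [← Real.rpow_mul (le_max_right _ _), inv_mul_cancel₀ ht.ne', Real.rpow_one]
        _ ≤ x ^ t := Real.rpow_le_rpow (by positivity) hRx ht.le
    linarith [le_max_left R 0]
  · have : R ≤ log ε⁻¹ := (Real.le_log_iff_exp_le (by positivity)).mpr (by linarith)
    linarith [Real.rpow_nonneg hx t]

def RapidlyDecreasing (f : ℕ → ℝ) : Prop :=
  ∀ M : ℝ, 0 < M → ∀ᶠ j : ℕ in atTop, f j < (j : ℝ) ^ (-M)

namespace RapidlyDecreasing

variable {f : ℕ → ℝ}

theorem eventually_le (hf : RapidlyDecreasing f) {c : ℝ} (hc : 0 < c) :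
    ∀ᶠ j : ℕ in atTop, f j ≤ c := by
  have hsmall := ((tendsto_rpow_neg_atTop one_pos).comp tendsto_natCast_atTop_atTop).eventually
    (gt_mem_nhds hc)
  filter_upwards [hf 1 one_pos, hsmall] with j h1 h2 using (h1.trans h2).le

theorem exists_sum_rpow_le (hf : RapidlyDecreasing f) (hf0 : ∀ j, 1 ≤ j → 0 ≤ f j) {τ : ℝ}
    (hτ : 0 < τ) : ∃ B, 0 ≤ B ∧ ∀ s : Finset ℕ, (∀ j ∈ s, 1 ≤ j) → ∑ j ∈ s, f j ^ τ ≤ B := by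
  set g : ℕ → ℝ := fun j => if 1 ≤ j then f j ^ τ else 0
  have hg0 (j : ℕ) : 0 ≤ g j := by
    by_cases hj : 1 ≤ j
    · simpa [g, hj] using Real.rpow_nonneg (hf0 j hj) τ
    · simp [g, hj]
  have hg : Summable g := by
    refine .of_norm_bounded_eventually_nat
      (Real.summable_nat_rpow.mpr (by norm_num : (-2 : ℝ) < -1)) ?_
    filter_upwards [hf (2 / τ) (by positivity), eventually_ge_atTop 1] with j hj hj1
    rw [Real.norm_of_nonneg (hg0 j)]
    calc g j = f j ^ τ := if_pos hj1
      _ ≤ ((j : ℝ) ^ (-(2 / τ))) ^ τ := Real.rpow_le_rpow (hf0 j hj1) hj.le hτ.le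
      _ = (j : ℝ) ^ (-2 : ℝ) := by
        rw [← Real.rpow_mul (Nat.cast_nonneg j)]
        field_simp
  refine ⟨∑' j, g j, tsum_nonneg hg0, fun s hs => ?_⟩
  calc ∑ j ∈ s, f j ^ τ = ∑ j ∈ s, g j := Finset.sum_congr rfl fun j hj => (if_pos (hs j hj)).symm
    _ ≤ ∑' j, g j := hg.sum_le_tsum s fun j _ => hg0 j

end RapidlyDecreasing

def infoSet (γ lam : ℕ → ℝ) (ε : ℝ) (d : ℕ) : Set (Fin d → ℕ) :=
  {n | (∀ i, 1 ≤ n i) ∧ ε ^ 2 < ∏ i, lamKJ γ lam (i.1 + 1) (n i)}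

theorem infoN_eq_encard_infoSet (γ lam : ℕ → ℝ) (ε : ℝ) (d : ℕ) :
    infoN γ lam ε d = (infoSet γ lam ε d).encard :=
  rfl

section lamKJ

variable {γ lam : ℕ → ℝ} {k j : ℕ}

@[simp]
theorem lamKJ_one : lamKJ γ lam k 1 = 1 := if_pos rfl

theorem lamKJ_of_ne_one (hj : j ≠ 1) : lamKJ γ lam k j = γ k * lam j := if_neg hj

theorem lamKJ_nonneg (hγ : 0 ≤ γ k) (hlam : 0 ≤ lam j) : 0 ≤ lamKJ γ lam k j := by
  unfold lamKJ
  split_ifs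
  exacts [zero_le_one, mul_nonneg hγ hlam]

theorem lamKJ_le_one (hγ : γ k ≤ 1) (hlam0 : 0 ≤ lam j) (hlam1 : lam j ≤ 1) :
    lamKJ γ lam k j ≤ 1 := by
  unfold lamKJ
  split_ifs
  exacts [le_rfl, mul_le_one₀ hγ hlam0 hlam1]

theorem lam_le_one (hlam_anti : AntitoneOn lam (Ici 1)) (hlam1 : lam 1 = 1) (hj : 1 ≤ j) :
    lam j ≤ 1 :=
  hlam1 ▸ hlam_anti (le_refl 1) hj hj

theorem mul_le_lamKJ (hlam_anti : AntitoneOn lam (Ici 1)) (hlam1 : lam 1 = 1) (hγ0 : 0 ≤ γ k)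
    (hγ1 : γ k ≤ 1) {m : ℕ} (hm : 1 ≤ m) (hmj : m ≤ j) : γ k * lam j ≤ lamKJ γ lam k m := by
  have hle : γ k * lam j ≤ γ k * lam m :=
    mul_le_mul_of_nonneg_left (hlam_anti hm (hm.trans hmj) hmj) hγ0
  rcases eq_or_ne m 1 with rfl | hm1
  · rw [lamKJ_one]
    exact hle.trans (by rwa [hlam1, mul_one])
  · rwa [lamKJ_of_ne_one hm1]

end lamKJ

section UpperBound

variable {γ lam : ℕ → ℝ} {ε : ℝ} {d J : ℕ}

theorem infoSet_subset_piFinset (hγ0 : ∀ k, 1 ≤ k → 0 ≤ γ k) (hγ1 : ∀ k, 1 ≤ k → γ k ≤ 1)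
    (hlam0 : ∀ j, 1 ≤ j → 0 ≤ lam j) (hlam1 : ∀ j, 1 ≤ j → lam j ≤ 1) (hJ1 : 1 ≤ J)
    (hJ : ∀ j, J < j → lam j ≤ ε ^ 2) :
    infoSet γ lam ε d ⊆ ↑(Fintype.piFinset fun _ : Fin d => Finset.Icc 1 J) := by
  rintro n ⟨hn1, hprod⟩
  have h0 (i : Fin d) : 0 ≤ lamKJ γ lam (i.1 + 1) (n i) :=
    lamKJ_nonneg (hγ0 _ (by omega)) (hlam0 _ (hn1 i))
  simp only [Finset.mem_coe, Fintype.mem_piFinset, Finset.mem_Icc]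
  refine fun i => ⟨hn1 i, not_lt.mp fun hJi => ?_⟩
  -- the other factors are at most `1`, so the `i`-th factor alone must exceed `ε ^ 2`
  have hfactor : ∏ i', lamKJ γ lam (i'.1 + 1) (n i') ≤ lamKJ γ lam (i.1 + 1) (n i) := by
    rw [← Finset.mul_prod_erase _ _ (Finset.mem_univ i)]
    refine mul_le_of_le_one_right (h0 i) (Finset.prod_le_one (fun i' _ => h0 i') fun i' _ => ?_)
    exact lamKJ_le_one (hγ1 _ (by omega)) (hlam0 _ (hn1 i')) (hlam1 _ (hn1 i'))
  have hsmall : lamKJ γ lam (i.1 + 1) (n i) ≤ ε ^ 2 := by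
    rw [lamKJ_of_ne_one (by omega)]
    exact (mul_le_of_le_one_left (hlam0 _ (hn1 i)) (hγ1 _ (by omega))).trans (hJ _ hJi)
  linarith

theorem sum_Icc_lamKJ_rpow (hJ1 : 1 ≤ J) {k : ℕ} (hγ : 0 ≤ γ k)
    (hlam0 : ∀ j, 1 ≤ j → 0 ≤ lam j) (τ : ℝ) :
    ∑ j ∈ Finset.Icc 1 J, lamKJ γ lam k j ^ τ = 1 + γ k ^ τ * ∑ j ∈ Finset.Ioc 1 J, lam j ^ τ := by
  rw [Finset.Icc_eq_cons_Ioc hJ1, Finset.sum_cons, lamKJ_one, Real.one_rpow, Finset.mul_sum]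
  refine congrArg _ (Finset.sum_congr rfl fun j hj => ?_)
  rw [Finset.mem_Ioc] at hj
  rw [lamKJ_of_ne_one (by omega), Real.mul_rpow hγ (hlam0 j (by omega))]

theorem sum_piFinset_prod_lamKJ_rpow_le (hγ0 : ∀ k, 1 ≤ k → 0 ≤ γ k)
    (hlam0 : ∀ j, 1 ≤ j → 0 ≤ lam j) (hJ1 : 1 ≤ J) {τ Bl Bg : ℝ} (hBl0 : 0 ≤ Bl)
    (hBl : ∑ j ∈ Finset.Ioc 1 J, lam j ^ τ ≤ Bl) (hBg : ∑ i : Fin d, γ (i.1 + 1) ^ τ ≤ Bg) :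
    ∑ n ∈ Fintype.piFinset (fun _ : Fin d => Finset.Icc 1 J),
      ∏ i, lamKJ γ lam (i.1 + 1) (n i) ^ τ ≤ exp (Bl * Bg) := by
  rw [← Finset.prod_univ_sum (fun _ => Finset.Icc 1 J)
    fun (i : Fin d) (j : ℕ) => lamKJ γ lam (i.1 + 1) j ^ τ]
  calc ∏ i : Fin d, ∑ j ∈ Finset.Icc 1 J, lamKJ γ lam (i.1 + 1) j ^ τ
      ≤ ∏ i : Fin d, exp (γ (i.1 + 1) ^ τ * Bl) := by
        refine Finset.prod_le_prod (fun i _ => Finset.sum_nonneg fun j hj => ?_) fun i _ => ?_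
        · exact Real.rpow_nonneg
            (lamKJ_nonneg (hγ0 _ (by omega)) (hlam0 j (Finset.mem_Icc.mp hj).1)) τ
        · rw [sum_Icc_lamKJ_rpow hJ1 (hγ0 _ (by omega)) hlam0]
          have := mul_le_mul_of_nonneg_left hBl (Real.rpow_nonneg (hγ0 (i.1 + 1) (by omega)) τ)
          linarith [Real.add_one_le_exp (γ (i.1 + 1) ^ τ * Bl)]
    _ = exp (Bl * ∑ i : Fin d, γ (i.1 + 1) ^ τ) := by
        rw [← Real.exp_sum, Finset.mul_sum]
        simp_rw [mul_comm]
    _ ≤ exp (Bl * Bg) := by gcongr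

theorem exists_infoN_eq_and_mul_rpow_le (hγ0 : ∀ k, 1 ≤ k → 0 ≤ γ k) (hγ1 : ∀ k, 1 ≤ k → γ k ≤ 1)
    (hlam0 : ∀ j, 1 ≤ j → 0 ≤ lam j) (hlam1 : ∀ j, 1 ≤ j → lam j ≤ 1) (hJ1 : 1 ≤ J)
    (hJ : ∀ j, J < j → lam j ≤ ε ^ 2) {τ Bl Bg : ℝ} (hτ : 0 ≤ τ) (hBl0 : 0 ≤ Bl)
    (hBl : ∑ j ∈ Finset.Ioc 1 J, lam j ^ τ ≤ Bl) (hBg : ∑ i : Fin d, γ (i.1 + 1) ^ τ ≤ Bg) :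
    ∃ N : ℕ, infoN γ lam ε d = N ∧ (N : ℝ) * (ε ^ 2) ^ τ ≤ exp (Bl * Bg) := by
  classical
  have hsub := infoSet_subset_piFinset (d := d) hγ0 hγ1 hlam0 hlam1 hJ1 hJ
  have hfin : (infoSet γ lam ε d).Finite := (Finset.finite_toSet _).subset hsub
  refine ⟨hfin.toFinset.card, by rw [infoN_eq_encard_infoSet, hfin.encard_eq_coe_toFinset_card], ?_⟩
  have h0 {n : Fin d → ℕ} (hn : ∀ i, 1 ≤ n i) (i : Fin d) :
      0 ≤ lamKJ γ lam (i.1 + 1) (n i) :=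
    lamKJ_nonneg (hγ0 _ (by omega)) (hlam0 _ (hn i))
  calc (hfin.toFinset.card : ℝ) * (ε ^ 2) ^ τ
      ≤ ∑ n ∈ hfin.toFinset, ∏ i, lamKJ γ lam (i.1 + 1) (n i) ^ τ := by
        rw [← nsmul_eq_mul]
        refine Finset.card_nsmul_le_sum _ _ _ fun n hn => ?_
        obtain ⟨hn1, hprod⟩ := hfin.mem_toFinset.mp hn
        rw [Real.finsetProd_rpow _ _ fun i _ => h0 hn1 i]
        exact Real.rpow_le_rpow (sq_nonneg ε) hprod.le hτ
    _ ≤ ∑ n ∈ Fintype.piFinset (fun _ : Fin d => Finset.Icc 1 J),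
          ∏ i, lamKJ γ lam (i.1 + 1) (n i) ^ τ := by
        refine Finset.sum_le_sum_of_subset_of_nonneg (hfin.toFinset_subset.mpr hsub)
          fun n hn _ => Finset.prod_nonneg fun i _ => Real.rpow_nonneg (h0 (fun i => ?_) i) τ
        exact (Finset.mem_Icc.mp (Fintype.mem_piFinset.mp hn i)).1
    _ ≤ exp (Bl * Bg) := sum_piFinset_prod_lamKJ_rpow_le hγ0 hlam0 hJ1 hBl0 hBl hBg

end UpperBound

theorem expSTWT_of_rapidlyDecreasing {γ lam : ℕ → ℝ} {t : ℝ} (hγ0 : ∀ k, 1 ≤ k → 0 ≤ γ k)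
    (hγ1 : ∀ k, 1 ≤ k → γ k ≤ 1) (hlam0 : ∀ j, 1 ≤ j → 0 ≤ lam j)
    (hlam1 : ∀ j, 1 ≤ j → lam j ≤ 1) (ht : 0 < t) (hγ : RapidlyDecreasing γ)
    (hlam : RapidlyDecreasing lam) : ExpSTWT γ lam 1 t := by
  intro δ hδ
  -- with `τ = δ / 4`, `log n(ε,d) ≤ Bl * Bg + (δ / 2) * log ε⁻¹`
  obtain ⟨Bl, hBl0, hBl⟩ := hlam.exists_sum_rpow_le hlam0 (τ := δ / 4) (by positivity)
  obtain ⟨Bg, hBg0, hBg⟩ := hγ.exists_sum_rpow_le hγ0 (τ := δ / 4) (by positivity)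
  obtain ⟨T, hT⟩ := exists_le_rpow_add_log_inv ht (2 * (Bl * Bg) / δ)
  refine ⟨T, fun d _ ε hε0 hε1 hTd => ?_⟩
  obtain ⟨J, hJ⟩ := eventually_atTop.mp (hlam.eventually_le (pow_pos hε0 2))
  have hBgd : ∑ i : Fin d, γ (i.1 + 1) ^ (δ / 4) ≤ Bg := by
    rw [Fin.sum_univ_eq_sum_range (fun k => γ (k + 1) ^ (δ / 4)), Finset.range_eq_Ico,
      Finset.sum_Ico_add' (fun k => γ k ^ (δ / 4))]
    exact hBg _ fun j hj => (Finset.mem_Ico.mp hj).1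
  obtain ⟨N, hN, hNle⟩ := exists_infoN_eq_and_mul_rpow_le (J := max J 1) hγ0 hγ1 hlam0 hlam1
    (le_max_right _ _) (fun j hj => hJ j ((le_max_left _ _).trans hj.le)) (by positivity) hBl0
    (hBl _ fun j hj => by rw [Finset.mem_Ioc] at hj; omega) hBgd
  refine ⟨N, hN, ?_⟩
  have hy0 : 0 < (ε ^ 2) ^ (δ / 4) := by positivity
  have hy1 : (ε ^ 2) ^ (δ / 4) ≤ 1 :=
    Real.rpow_le_one (by positivity) (pow_le_one₀ hε0.le hε1) (by positivity)
  have hlog := log_max_one_le hy0 hy1 (mul_nonneg hBl0 hBg0) hNle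
  have hlogy : log ((ε ^ 2) ^ (δ / 4))⁻¹ = δ / 2 * log ε⁻¹ := by
    rw [Real.log_inv, Real.log_rpow (by positivity), Real.log_pow, Real.log_inv]
    push_cast
    ring
  rw [hlogy] at hlog
  have hL := log_inv_nonneg_of_le_one hε0 hε1
  have hR := mul_le_mul_of_nonneg_left (hT d (Nat.cast_nonneg d) ε hε0 hε1 hTd) hδ.le
  have hδR : δ * (2 * (Bl * Bg) / δ) = 2 * (Bl * Bg) := by field_simp
  have hdt : 0 ≤ (d : ℝ) ^ t := by positivity
  rw [Real.rpow_one, div_lt_iff₀ (by positivity)]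
  linarith [mul_nonneg hδ.le hdt]

theorem ExpSTWT.log_lt_mul {γ lam : ℕ → ℝ} {s t : ℝ} (h : ExpSTWT γ lam s t) {δ : ℝ}
    (hδ : 0 < δ) : ∃ T : ℝ, ∀ d : ℕ, 1 ≤ d → ∀ ε : ℝ, 0 < ε → ε ≤ 1 → T ≤ d + ε⁻¹ →
      ∀ K : ℕ, (K : ℕ∞) ≤ infoN γ lam ε d →
        log K < δ * ((d : ℝ) ^ t + (1 + log ε⁻¹) ^ s) := by
  obtain ⟨T, hT⟩ := h δ hδ
  refine ⟨T, fun d hd ε hε0 hε1 hTd K hK => ?_⟩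
  obtain ⟨N, hN, hlt⟩ := hT d hd ε hε0 hε1 hTd
  have hL := log_inv_nonneg_of_le_one hε0 hε1
  have hD : 0 < (d : ℝ) ^ t + (1 + log ε⁻¹) ^ s :=
    add_pos_of_pos_of_nonneg (Real.rpow_pos_of_pos (by exact_mod_cast hd) t)
      (Real.rpow_nonneg (by linarith) s)
  rw [div_lt_iff₀ hD] at hlt
  refine lt_of_le_of_lt ?_ hlt
  have hKN : K ≤ N := by rw [hN] at hK; exact_mod_cast hK
  rcases K.eq_zero_or_pos with rfl | hK0
  · simpa using Real.log_nonneg (le_max_left 1 (N : ℝ))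
  · exact Real.log_le_log (by exact_mod_cast hK0) ((Nat.cast_le.mpr hKN).trans (le_max_right _ _))

section LowerBound

variable {γ lam : ℕ → ℝ} {ε : ℝ} {d : ℕ}

theorem card_le_infoN {α : Type*} [Fintype α] {F : α → Fin d → ℕ} (hF : Function.Injective F)
    (hmem : ∀ a, F a ∈ infoSet γ lam ε d) : (Fintype.card α : ℕ∞) ≤ infoN γ lam ε d := by
  rw [infoN_eq_encard_infoSet, ← ENat.card_eq_coe_fintype_card, ← Set.encard_univ,
    ← hF.encard_image, Set.image_univ]
  exact Set.encard_le_encard (Set.range_subset_iff.mpr hmem)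

theorem le_infoN_succ_of_sq_lt_mul (hlam_anti : AntitoneOn lam (Ici 1)) (hlam1 : lam 1 = 1)
    (hγ0 : 0 ≤ γ 1) (hγ1 : γ 1 ≤ 1) {j : ℕ} (hε : ε ^ 2 < γ 1 * lam j) :
    (j : ℕ∞) ≤ infoN γ lam ε (d + 1) := by
  have key := card_le_infoN (γ := γ) (lam := lam) (ε := ε)
    (F := (fun m => Fin.cons (m.1 + 1) fun _ => 1 : Fin j → Fin (d + 1) → ℕ)) ?_ ?_
  · simpa using key
  · intro a b h
    ext
    simpa using congrFun h 0
  · intro m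
    refine ⟨Fin.cases (by simp) (by simp), ?_⟩
    rw [Fin.prod_univ_succ]
    simpa using hε.trans_le (mul_le_lamKJ hlam_anti hlam1 hγ0 hγ1 (by omega) m.2)

theorem choose_le_infoN (hγ_anti : AntitoneOn γ (Ici 1)) (hγ0 : ∀ k, 1 ≤ k → 0 ≤ γ k)
    (hlam2 : 0 ≤ lam 2) {m : ℕ} (hε : ε ^ 2 < (γ d * lam 2) ^ m) :
    (d.choose m : ℕ∞) ≤ infoN γ lam ε d := by
  classical
  have key := card_le_infoN (γ := γ) (lam := lam) (ε := ε)
    (F := fun (S : {S : Finset (Fin d) // S.card = m}) k => if k ∈ S.1 then 2 else 1) ?_ ?_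
  · simpa [Fintype.card_finset_len] using key
  · intro S S' h
    ext k
    have := congrFun h k
    by_cases hk : k ∈ S.1 <;> by_cases hk' : k ∈ S'.1 <;> simp_all
  · rintro ⟨S, rfl⟩
    refine ⟨fun k => by dsimp only; split_ifs <;> norm_num, hε.trans_le ?_⟩
    have hprod : ∏ k : Fin d, lamKJ γ lam (k.1 + 1) (if k ∈ S then 2 else 1)
        = ∏ k ∈ S, γ (k.1 + 1) * lam 2 := by
      trans ∏ k : Fin d, if k ∈ S then γ (k.1 + 1) * lam 2 else 1
      · exact Finset.prod_congr rfl fun k _ => by split_ifs <;> simp [lamKJ_of_ne_one]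
      · rw [Finset.prod_ite_mem, Finset.univ_inter]
    rw [hprod, ← Finset.prod_const]
    refine Finset.prod_le_prod (fun k _ => mul_nonneg (hγ0 d k.pos) hlam2) fun k _ => ?_
    exact mul_le_mul_of_nonneg_right (hγ_anti (Nat.le_add_left 1 k.1) k.pos k.2) hlam2

theorem exists_le_infoN_succ (hlam_anti : AntitoneOn lam (Ici 1)) (hlam1 : lam 1 = 1)
    (hγ0 : 0 < γ 1) (hγ1 : γ 1 ≤ 1) {j : ℕ} (hj : 1 ≤ j) (hlamj : 0 < lam j) :
    ∃ ε : ℝ, 0 < ε ∧ ε ≤ 1 ∧ (j : ℕ∞) ≤ infoN γ lam ε (d + 1) ∧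
      log ε⁻¹ = (log 2 + log (γ 1)⁻¹ + log (lam j)⁻¹) / 2 := by
  set x := γ 1 * lam j / 2 with hx
  have hx0 : 0 < x := by positivity
  have hx1 : x ≤ 1 := by
    have := mul_le_one₀ hγ1 hlamj.le (lam_le_one hlam_anti hlam1 hj)
    linarith
  refine ⟨√x, Real.sqrt_pos.mpr hx0, Real.sqrt_le_one.mpr hx1, ?_, ?_⟩
  · refine le_infoN_succ_of_sq_lt_mul hlam_anti hlam1 hγ0.le hγ1 ?_
    rw [Real.sq_sqrt hx0.le, hx]
    linarith
  · rw [Real.log_inv, Real.log_sqrt hx0.le, Real.log_div (by positivity) two_ne_zero,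
      Real.log_mul hγ0.ne' hlamj.ne', Real.log_inv, Real.log_inv]
    ring

theorem exists_choose_le_infoN (hγ_anti : AntitoneOn γ (Ici 1)) (hγ_pos : ∀ k, 1 ≤ k → 0 < γ k)
    (hγ_le : ∀ k, 1 ≤ k → γ k ≤ 1) (hlam2 : 0 < lam 2) (hlam2_le : lam 2 ≤ 1) (hd : 1 ≤ d)
    (m : ℕ) : ∃ ε : ℝ, 0 < ε ∧ ε ≤ 1 ∧ (d.choose m : ℕ∞) ≤ infoN γ lam ε d ∧
      log ε⁻¹ = (log 2 + m * log (γ d * lam 2)⁻¹) / 2 := by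
  set q := γ d * lam 2
  have hq0 : 0 < q := mul_pos (hγ_pos d hd) hlam2
  have hq1 : q ≤ 1 := mul_le_one₀ (hγ_le d hd) hlam2.le hlam2_le
  set x := q ^ m / 2 with hx
  have hx0 : 0 < x := by positivity
  have hx1 : x ≤ 1 := by linarith [pow_le_one₀ (n := m) hq0.le hq1]
  refine ⟨√x, Real.sqrt_pos.mpr hx0, Real.sqrt_le_one.mpr hx1, ?_, ?_⟩
  · refine choose_le_infoN hγ_anti (fun k hk => (hγ_pos k hk).le) hlam2.le ?_
    rw [Real.sq_sqrt hx0.le, hx]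
    linarith
  · rw [Real.log_inv, Real.log_sqrt hx0.le, Real.log_div (by positivity) two_ne_zero,
      Real.log_pow, Real.log_inv]
    ring

end LowerBound

theorem rapidlyDecreasing_lam_of_expSTWT {γ lam : ℕ → ℝ} {t : ℝ}
    (hlam_anti : AntitoneOn lam (Ici 1)) (hlam1 : lam 1 = 1) (hγ0 : 0 < γ 1) (hγ1 : γ 1 ≤ 1)
    (hwt : ExpSTWT γ lam 1 t) : RapidlyDecreasing lam := by
  intro M hM
  by_contra hfreq
  simp only [not_eventually, not_lt] at hfreq
  obtain ⟨T, hT⟩ := hwt.log_lt_mul (inv_pos.mpr hM)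
  -- fix the dimension `d = ⌈T⌉₊ + 1` and let `j → ∞` along indices with `λ_j ≥ j ^ (-M)`
  set C := ((⌈T⌉₊ + 1 : ℕ) : ℝ) ^ t + 1 + (log 2 + log (γ 1)⁻¹) / 2 with hC
  obtain ⟨j, hj, hj1, hjC⟩ := (hfreq.and_eventually ((eventually_ge_atTop 1).and
    ((Real.tendsto_log_atTop.comp tendsto_natCast_atTop_atTop).eventually_ge_atTop
      (2 * C / M)))).exists
  have hj0 : (0 : ℝ) < j := by exact_mod_cast hj1
  obtain ⟨ε, hε0, hε1, hK, hL⟩ := exists_le_infoN_succ (d := ⌈T⌉₊) hlam_anti hlam1 hγ0 hγ1 hj1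
    ((Real.rpow_pos_of_pos hj0 _).trans_le hj)
  have hlt := hT (⌈T⌉₊ + 1) (by omega) ε hε0 hε1
    (by push_cast; linarith [Nat.le_ceil T, inv_pos.mpr hε0]) j hK
  rw [Real.rpow_one, hL, lt_inv_mul_iff₀ hM] at hlt
  rw [Function.comp_apply, div_le_iff₀ hM] at hjC
  linarith [log_inv_le_mul_log_of_rpow_neg_le hj0 hj]

theorem rapidlyDecreasing_gamma_of_expSTWT {γ lam : ℕ → ℝ} {t : ℝ}
    (hγ_anti : AntitoneOn γ (Ici 1)) (hγ_pos : ∀ k, 1 ≤ k → 0 < γ k)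
    (hγ_le : ∀ k, 1 ≤ k → γ k ≤ 1) (hlam2 : 0 < lam 2) (hlam2_le : lam 2 ≤ 1) (ht0 : 0 < t)
    (ht1 : t < 1) (hwt : ExpSTWT γ lam 1 t) : RapidlyDecreasing γ := by
  intro M hM
  by_contra hfreq
  simp only [not_eventually, not_lt] at hfreq
  have h1t : 0 < 1 - t := by linarith
  set δ := (1 - t) / M
  obtain ⟨T, hT⟩ := hwt.log_lt_mul (δ := δ) (by positivity)
  set Cl := log (lam 2)⁻¹
  obtain ⟨d, hd, hd1, hTd, hℓ⟩ := (hfreq.and_eventually ((eventually_ge_atTop 1).and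
    ((tendsto_natCast_atTop_atTop.eventually_ge_atTop T).and
      ((Real.tendsto_log_atTop.comp tendsto_natCast_atTop_atTop).eventually_ge_atTop
        (2 * (log 2 + δ * (3 + Cl / 2)) / (1 - t)))))).exists
  -- tuples with exactly `m ≈ d ^ t` entries equal to `2`: about `(d / m) ^ m` of them
  set m := ⌈(d : ℝ) ^ t⌉₊
  obtain ⟨ε, hε0, hε1, hK, hL⟩ :=
    exists_choose_le_infoN hγ_anti hγ_pos hγ_le hlam2 hlam2_le hd1 m
  have hlt := hT d hd1 ε hε0 hε1 (by linarith [inv_pos.mpr hε0]) _ hK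
  have hd0 : (0 : ℝ) < d := by exact_mod_cast hd1
  have hq : log (γ d * lam 2)⁻¹ ≤ M * log d + Cl := by
    rw [mul_inv, Real.log_mul (inv_ne_zero (hγ_pos d hd1).ne') (inv_ne_zero hlam2.ne')]
    linarith [log_inv_le_mul_log_of_rpow_neg_le hd0 hd]
  have hdt : (d : ℝ) ^ t ≤ m := Nat.le_ceil _
  have hm1 : (1 : ℝ) ≤ m := le_trans (Real.one_le_rpow (by exact_mod_cast hd1) ht0.le) hdt
  have hden : (d : ℝ) ^ t + (1 + log ε⁻¹) ^ (1 : ℝ) ≤ m * (3 + Cl / 2 + M / 2 * log d) := by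
    have := mul_le_mul_of_nonneg_left hq (by linarith : (0 : ℝ) ≤ m)
    rw [Real.rpow_one, hL]
    linarith [Real.log_two_lt_d9]
  have key : (m : ℝ) * ((1 - t) * log d - log 2) < m * (δ * (3 + Cl / 2 + M / 2 * log d)) :=
    calc (m : ℝ) * ((1 - t) * log d - log 2) ≤ log (d.choose m) :=
          mul_sub_log_two_le_log_choose ht0.le ht1.le hd1
      _ < δ * ((d : ℝ) ^ t + (1 + log ε⁻¹) ^ (1 : ℝ)) := hlt
      _ ≤ δ * (m * (3 + Cl / 2 + M / 2 * log d)) :=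
        mul_le_mul_of_nonneg_left hden (by positivity)
      _ = m * (δ * (3 + Cl / 2 + M / 2 * log d)) := by ring
  have hkey := lt_of_mul_lt_mul_left key (by positivity)
  have hδM : δ * (M / 2 * log d) = (1 - t) / 2 * log d := by
    simp only [δ]
    field_simp
  rw [Function.comp_apply, div_le_iff₀ h1t] at hℓ
  linarith

/-- for 0 < t < 1, EXP-(1,t)-WT holds iff for every M > 0 one eventually has
γ_j < j^(-M) and for every M > 0 one eventually has λ_j < j^(-M). -/
theorem stmt4 (γ lam : ℕ → ℝ)
    (hlam_anti : AntitoneOn lam (Set.Ici 1)) (hlam1 : lam 1 = 1) (hlam2 : 0 < lam 2)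
    (hlam_nonneg : ∀ j, 1 ≤ j → 0 ≤ lam j)
    (hγ_anti : AntitoneOn γ (Set.Ici 1))
    (hγ_pos : ∀ j, 1 ≤ j → 0 < γ j) (hγ_le : ∀ j, 1 ≤ j → γ j ≤ 1)
    (t : ℝ) (ht0 : 0 < t) (ht1 : t < 1) :
    ExpSTWT γ lam 1 t ↔
      ((∀ M : ℝ, 0 < M → ∀ᶠ j : ℕ in atTop, γ j < (j : ℝ) ^ (-M)) ∧
        (∀ M : ℝ, 0 < M → ∀ᶠ j : ℕ in atTop, lam j < (j : ℝ) ^ (-M))) := by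
  have hlam_le (j : ℕ) (hj : 1 ≤ j) : lam j ≤ 1 := lam_le_one hlam_anti hlam1 hj
  have hγ0 (k : ℕ) (hk : 1 ≤ k) : 0 ≤ γ k := (hγ_pos k hk).le
  refine ⟨fun hwt => ⟨?_, ?_⟩, fun h => ?_⟩
  · exact rapidlyDecreasing_gamma_of_expSTWT hγ_anti hγ_pos hγ_le hlam2 (hlam_le 2 one_le_two)
      ht0 ht1 hwt
  · exact rapidlyDecreasing_lam_of_expSTWT hlam_anti hlam1 (hγ_pos 1 le_rfl) (hγ_le 1 le_rfl) hwt
  · exact expSTWT_of_rapidlyDecreasing hγ0 hγ_le hlam_nonneg hlam_le ht0 h.1 h.2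
end
end
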